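/- arXiv:2112.15519 — 3 statements merged into one kernel-verified Lean document; each statement's English description precedes it below -/
import Mathlib

section
/- Let X be a topologically transitive one-sided shift space such that Sp_l(X) is finite and contains no periodic point. Then X has property (*): for every word μ in the language ℒ(X), there exists x ∈ X with P_{|μ|}(x) = {μ}. -/
open Function Set

variable {A : Type*}

/-- The one-sided shift map. -/
def shiftMap (x : ℕ → A) : ℕ → A := fun n => x (n + 1)

/-- Prepend a finite word to a one-sided sequence. -/
def prependWord (μ : List A) (x : ℕ → A) : ℕ → A :=
  fun n => if h : n < μ.length then μ.get ⟨n, h⟩ else x (n - μ.length)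

/-- `PastSet X l x` is the set `P_l(x)` of words `μ` of length `l` with `μx ∈ X`. -/
def PastSet (X : Set (ℕ → A)) (l : ℕ) (x : ℕ → A) : Set (List A) :=
  {μ | μ.length = l ∧ prependWord μ x ∈ X}

/-- A point is left special if it has at least two shift-preimages in `X`. -/
def IsLeftSpecial (X : Set (ℕ → A)) (x : ℕ → A) : Prop :=
  x ∈ X ∧ ∃ y z, y ∈ X ∧ z ∈ X ∧ y ≠ z ∧ shiftMap y = x ∧ shiftMap z = x

/-- The set of left special elements of `X`. -/
def SpL (X : Set (ℕ → A)) : Set (ℕ → A) := {x | IsLeftSpecial X x}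

/-- A point is periodic if `σ^n x = x` for some `n ≥ 1`. -/
def IsPer (x : ℕ → A) : Prop := ∃ n ≥ 1, shiftMap^[n] x = x

/-- The language of `X`: finite words occurring as factors of points of `X`. -/
def Lang (X : Set (ℕ → A)) : Set (List A) :=
  {μ | ∃ x ∈ X, ∃ n : ℕ, ∀ i : Fin μ.length, x (n + i) = μ.get i}

/-- The two-sided shift space associated with `X` (inverse limit identification). -/
def twoSided (X : Set (ℕ → A)) : Set (ℤ → A) :=
  {z | ∀ n : ℤ, (fun i : ℕ => z (n + i)) ∈ X}

/-- Left special elements of a two-sided shift space. -/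
def SpLZ (Y : Set (ℤ → A)) : Set (ℤ → A) :=
  {z | z ∈ Y ∧ ∃ z' ∈ Y, z' (-1) ≠ z (-1) ∧ ∀ i : ℕ, z' i = z i}

/-- Right tail equivalence. -/
def Rte (x y : ℕ → A) : Prop := ∃ M M' : ℕ, shiftMap^[M] x = shiftMap^[M'] y

lemma shift_iter (x : ℕ → A) (n m : ℕ) : shiftMap^[n] x m = x (m + n) := by
  induction n generalizing x with
  | zero => rfl
  | succ k ih =>
    rw [Function.iterate_succ_apply, ih]; rfl

lemma iter_prepend (μ : List A) (x : ℕ → A) :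
    shiftMap^[μ.length] (prependWord μ x) = x := by
  funext m
  rw [shift_iter]
  unfold prependWord
  rw [dif_neg (by omega)]
  congr 1; omega

lemma occ_prepend {μ : List A} {x0 : ℕ → A} {n : ℕ}
    (hO : ∀ i (h : i < μ.length), x0 (n + i) = μ.get ⟨i, h⟩) :
    prependWord μ (shiftMap^[n + μ.length] x0) = shiftMap^[n] x0 := by
  funext m
  unfold prependWord
  by_cases h : m < μ.length
  · rw [dif_pos h, shift_iter, ← hO m h]
    congr 1; omega
  · rw [dif_neg h, shift_iter, shift_iter]
    congr 1; omega

lemma iter_mod {α : Type*} {f : α → α} {p : α} {d : ℕ} (hd : 0 < d) (hp : f^[d] p = p) (t : ℕ) :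
    f^[t] p = f^[t % d] p := by
  conv_lhs => rw [← Nat.mod_add_div t d, Function.iterate_add_apply]
  congr 1
  generalize t / d = q
  induction q with
  | zero => rfl
  | succ k ih =>
    rw [Nat.mul_succ, Function.iterate_add_apply, hp, ih]

lemma cyl_open [TopologicalSpace A] [DiscreteTopology A] (v : ℕ → A) (m : ℕ) :
    IsOpen {u : ℕ → A | ∀ i < m, u i = v i} := by
  have : {u : ℕ → A | ∀ i < m, u i = v i} = ⋂ i : Fin m, {u : ℕ → A | u i = v i} := by
    ext u; simp [Fin.forall_iff]
  rw [this]
  refine isOpen_iInter_of_finite fun i => ?_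
  show IsOpen ((fun u : ℕ → A => u (i : ℕ)) ⁻¹' {v (i : ℕ)})
  exact (isOpen_discrete {v (i : ℕ)}).preimage (continuous_apply (i : ℕ))

lemma twoPasts {X : Set (ℕ → A)} (hsub : ∀ x ∈ X, shiftMap x ∈ X) {x : ℕ → A} {μ ν : List A}
    (hμ : prependWord μ x ∈ X) (hν : prependWord ν x ∈ X)
    (hlen : ν.length = μ.length) (hne : ν ≠ μ) :
    ∃ k < μ.length, ∃ sp ∈ SpL X, shiftMap^[k] sp = x := by
  classical
  have hiter : ∀ n, ∀ y ∈ X, shiftMap^[n] y ∈ X := by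
    intro n
    induction n with
    | zero => exact fun y hy => hy
    | succ k ih => intro y hy
                   rw [Function.iterate_succ_apply]
                   exact ih _ (hsub y hy)
  set l := μ.length with hl
  set D : Finset ℕ := (Finset.range l).filter
    (fun j => ∃ h : j < l, ν.get ⟨j, hlen ▸ h⟩ ≠ μ.get ⟨j, h⟩) with hD
  have hDne : D.Nonempty := by
    by_contra hemp
    apply hne
    apply List.ext_get hlen
    intro i h1 h2
    by_contra hgne
    apply hemp
    exact ⟨i, Finset.mem_filter.2 ⟨Finset.mem_range.2 h2, h2, hgne⟩⟩
  set j := D.max' hDne with hj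
  have hjD : j ∈ D := D.max'_mem hDne
  have hjl : j < l := Finset.mem_range.1 (Finset.mem_filter.1 hjD).1
  obtain ⟨hjl', hdiff⟩ := (Finset.mem_filter.1 hjD).2
  have hmax : ∀ i ∈ D, i ≤ j := fun i hi => D.le_max' i hi
  set p := shiftMap^[j+1] (prependWord μ x) with hp
  have key : shiftMap^[j+1] (prependWord ν x) = p := by
    funext m
    rw [hp, shift_iter, shift_iter]
    unfold prependWord
    by_cases h : m + (j+1) < l
    · rw [dif_pos (by omega : m + (j+1) < ν.length), dif_pos (h : m + (j+1) < μ.length)]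
      by_contra hgne
      have : m + (j+1) ∈ D := Finset.mem_filter.2 ⟨Finset.mem_range.2 h, h, hgne⟩
      have := hmax _ this
      omega
    · rw [dif_neg (by omega : ¬ m + (j+1) < ν.length), dif_neg h, hlen]
  set y := shiftMap^[j] (prependWord ν x) with hy
  set z := shiftMap^[j] (prependWord μ x) with hz
  have hyX : y ∈ X := hiter _ _ hν
  have hzX : z ∈ X := hiter _ _ hμ
  have hsy : shiftMap y = p :=
    (Function.iterate_succ_apply' shiftMap j (prependWord ν x)).symm.trans key
  have hsz : shiftMap z = p :=
    (Function.iterate_succ_apply' shiftMap j (prependWord μ x)).symm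
  have hynez : y ≠ z := by
    intro h
    apply hdiff
    have h0 := congrFun h 0
    rw [hy, hz, shift_iter, shift_iter, Nat.zero_add] at h0
    unfold prependWord at h0
    rw [dif_pos (hlen ▸ hjl' : j < ν.length), dif_pos (hjl' : j < μ.length)] at h0
    exact h0
  have hpSp : p ∈ SpL X := ⟨hsy ▸ hsub y hyX, y, z, hyX, hzX, hynez, hsy, hsz⟩
  refine ⟨l - (j+1), by omega, p, hpSp, ?_⟩
  rw [hp, ← Function.iterate_add_apply]
  have : l - (j + 1) + (j + 1) = l := by omega
  rw [this, hl, iter_prepend]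

/-- a transitive one-sided shift with finitely many left special elements,
none periodic, has property (*). -/
theorem stmt6 [Finite A] [TopologicalSpace A] [DiscreteTopology A]
    (X : Set (ℕ → A)) (hne : X.Nonempty) (hcl : IsClosed X)
    (hseq : shiftMap '' X = X)
    (htrans : ∃ x0 ∈ X, ∀ x ∈ X, x ∈ closure {y | ∃ n : ℕ, shiftMap^[n] x0 = y})
    (hfin : (SpL X).Finite) (hper : ∀ x ∈ SpL X, ¬ IsPer x) :
    ∀ μ ∈ Lang X, ∃ x ∈ X, PastSet X μ.length x = {μ} := by
  classical
  intro μ hμL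
  set l := μ.length with hl
  have hsub : ∀ x ∈ X, shiftMap x ∈ X := fun x hx => hseq ▸ Set.mem_image_of_mem _ hx
  have hiter : ∀ n, ∀ x ∈ X, shiftMap^[n] x ∈ X := by
    intro n
    induction n with
    | zero => exact fun y hy => hy
    | succ k ih =>
      intro y hy
      rw [Function.iterate_succ_apply]
      exact ih _ (hsub y hy)
  have hsurj : ∀ y ∈ X, ∃ x ∈ X, shiftMap x = y := by
    intro y hy
    rw [← hseq] at hy
    obtain ⟨x, hx, h⟩ := hy
    exact ⟨x, hx, h⟩
  have hpast : ∀ y ∈ X, ∀ m : ℕ, ∃ v ∈ X, shiftMap^[m] v = y := by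
    intro y hy m
    induction m with
    | zero => exact ⟨y, hy, rfl⟩
    | succ k ih =>
      obtain ⟨v, hv, hvk⟩ := ih
      obtain ⟨u, hu, huv⟩ := hsurj v hv
      exact ⟨u, hu, by rw [Function.iterate_succ_apply, huv, hvk]⟩
  obtain ⟨x0, hx0, hdense⟩ := htrans
  -- a point of X starting with μ
  obtain ⟨w, hw, nw, hwocc⟩ := hμL
  set y : ℕ → A := shiftMap^[nw] w with hy
  have hyX : y ∈ X := hiter _ _ hw
  have hwocc' : ∀ i (h : i < l), w (nw + i) = μ.get ⟨i, h⟩ := fun i h => hwocc ⟨i, h⟩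
  have hyμ : ∀ i (h : i < l), y i = μ.get ⟨i, h⟩ := by
    intro i h
    rw [hy, shift_iter, ← hwocc' i h]
    congr 1; omega
  -- the finite exceptional set
  set F : Set (ℕ → A) := ⋃ k ∈ Set.Iio l, shiftMap^[k] '' SpL X with hF
  have hFfin : F.Finite := (Set.finite_Iio l).biUnion fun k _ => hfin.image _
  suffices h : ∃ x, prependWord μ x ∈ X ∧ x ∉ F by
    obtain ⟨x, hxX, hxF⟩ := h
    have hxmem : x ∈ X := by
      have := hiter μ.length _ hxX
      rwa [iter_prepend] at this
    refine ⟨x, hxmem, ?_⟩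
    ext ν
    simp only [Set.mem_singleton_iff]
    constructor
    · rintro ⟨hlen, hν⟩
      by_contra hne'
      obtain ⟨k, hkl, sp, hsp, hksp⟩ := twoPasts hsub hxX hν hlen hne'
      exact hxF (Set.mem_biUnion (hkl : k ∈ Set.Iio l) ⟨sp, hsp, hksp⟩)
    · rintro rfl
      exact ⟨rfl, hxX⟩
  by_contra hcon
  push_neg at hcon
  -- occurrences of μ in x0
  set O : Set ℕ := {n | ∀ i (h : i < l), x0 (n + i) = μ.get ⟨i, h⟩} with hO
  have hOunb : ∀ N : ℕ, ∃ n ∈ O, N ≤ n := by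
    intro N
    obtain ⟨v, hv, hvy⟩ := hpast y hyX N
    have hvcl := hdense v hv
    obtain ⟨u, huU, r, hru⟩ :=
      mem_closure_iff.mp hvcl _ (cyl_open v (N + l)) (fun i _ => rfl)
    refine ⟨r + N, ?_, by omega⟩
    intro i hi
    have h1 : x0 (r + N + i) = u (N + i) := by
      rw [← hru, shift_iter]; congr 1; omega
    rw [h1, huU (N + i) (by omega)]
    have : v (N + i) = shiftMap^[N] v i := by rw [shift_iter]; congr 1; omega
    rw [this, hvy]
    exact hyμ i hi
  have hOinf : O.Infinite := by
    by_contra hninf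
    rw [Set.not_infinite] at hninf
    obtain ⟨b, hb⟩ := hninf.bddAbove
    obtain ⟨n, hn, hNn⟩ := hOunb (b + 1)
    exact absurd (hb hn) (by omega)
  have hmapsO : Set.MapsTo (fun n => shiftMap^[n + l] x0) O F := by
    intro n hn
    apply hcon
    rw [occ_prepend hn]
    exact hiter n x0 hx0
  obtain ⟨a, ha, b, hb, hab, heq⟩ := hOinf.exists_ne_map_eq_of_mapsTo hmapsO hFfin
  -- reduce to a < b
  have key : ∀ a b : ℕ, a ∈ O → a < b →
      shiftMap^[a + l] x0 = shiftMap^[b + l] x0 → False := by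
    intro a b ha hab heq
    set d := b - a with hd
    set p := shiftMap^[a + l] x0 with hp
    have hdp : shiftMap^[d] p = p := by
      rw [hp, ← Function.iterate_add_apply]
      have : d + (a + l) = b + l := by omega
      rw [this, ← heq]
    -- the orbit of x0 is finite
    have horb : {z : ℕ → A | ∃ n : ℕ, shiftMap^[n] x0 = z} ⊆
        (fun i => shiftMap^[i] x0) '' Set.Iio (a + l + d) := by
      rintro z ⟨n, rfl⟩
      by_cases hn : n < a + l + d
      · exact ⟨n, hn, rfl⟩
      · have h1 : shiftMap^[n] x0 = shiftMap^[n - (a+l)] p := by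
          rw [hp, ← Function.iterate_add_apply]
          congr 1; omega
        have hd0 : 0 < d := by omega
        rw [h1, iter_mod hd0 hdp]
        refine ⟨a + l + (n - (a+l)) % d, ?_, ?_⟩
        · have := Nat.mod_lt (n - (a+l)) hd0
          simp only [Set.mem_Iio]; omega
        · have he : a + l + (n - (a + l)) % d = (n - (a + l)) % d + (a + l) := by omega
          rw [hp, ← Function.iterate_add_apply, he]
    have horbfin : {z : ℕ → A | ∃ n : ℕ, shiftMap^[n] x0 = z}.Finite :=
      Set.Finite.subset ((Set.finite_Iio _).image _) horb
    have hXfin : X.Finite := by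
      refine Set.Finite.subset horbfin ?_
      intro x hx
      have := hdense x hx
      rwa [horbfin.isClosed.closure_eq] at this
    -- some non-periodic left special point exists
    have hpF : p ∈ F := hmapsO ha
    rw [hF] at hpF
    simp only [Set.mem_iUnion, Set.mem_image] at hpF
    obtain ⟨k, hk, sp, hsp, hksp⟩ := hpF
    have hspX : sp ∈ X := hsp.1
    -- shiftMap is injective on X
    have hmX : Set.MapsTo shiftMap X X := fun x hx => hsub x hx
    have hsX : Set.SurjOn shiftMap X X := hseq.symm.subset
    have hinj : Set.InjOn shiftMap X :=
      ((hXfin.surjOn_iff_bijOn_of_mapsTo hmX).1 hsX).injOn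
    have hinjIter : ∀ n, Set.InjOn (shiftMap^[n]) X := by
      intro n
      induction n with
      | zero => exact fun u _ v _ h => h
      | succ k ih =>
        intro u hu v hv h
        rw [Function.iterate_succ_apply, Function.iterate_succ_apply] at h
        exact hinj hu hv (ih (hsub u hu) (hsub v hv) h)
    -- sp must be periodic
    have hperSp : IsPer sp := by
      obtain ⟨i, -, j, -, hij, hije⟩ :=
        Set.infinite_univ.exists_ne_map_eq_of_mapsTo
          (fun (i : ℕ) _ => hiter i sp hspX) hXfin
      have key2 : ∀ i j : ℕ, i < j → shiftMap^[i] sp = shiftMap^[j] sp → IsPer sp := by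
        intro i j hij he
        have h2 : shiftMap^[i] (shiftMap^[j - i] sp) = shiftMap^[i] sp := by
          rw [← Function.iterate_add_apply]
          have : i + (j - i) = j := by omega
          rw [this, he]
        have := hinjIter i (hiter _ _ hspX) hspX h2
        exact ⟨j - i, by omega, this⟩
      rcases hij.lt_or_gt with h | h
      · exact key2 _ _ h hije
      · exact key2 _ _ h hije.symm
    exact hper sp hsp hperSp
  rcases hab.lt_or_gt with h | h
  · exact key a b ha h heq
  · exact key b a hb h heq.symm
end

section
/- Let η ∈ A^ℕ be a non-periodic Toeplitz sequence over a finite alphabet A, and let X_η be the orbit closure of η under the shift. Then X_η has property (*): for every word μ ∈ ℒ(X_η) there exists y ∈ X_η with P_{|μ|}(y) = {μ}. In fact, if μ = η_{[0, m−1]}, then P_m(η_{[m,∞)}) = {μ}. -/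
open Function Set

variable {A : Type*}

/-!
A point `x ∈ X_η` that agrees with `σ^j η` from position `m` on must equal `σ^j η`. Fix `i` and a
period `p` of position `j + i`, and look at the offsets `d ≥ m` at which ever longer prefixes of `x`
occur in `σ^j η`. Toeplitz sequences are recurrent, so such offsets exist for every length, and
by pigeonhole some residue `r` mod `p` carries offsets for every length. Since `x` continues like
`σ^j η`, an occurrence of a long prefix at offset `d₂` followed by one at offset `d₁` gives one at
`d₁ + d₂`, so these residues form a nonempty additively closed subset of `ZMod p`, hence contain
`0`. An occurrence at an offset divisible by `p` then forces `x i = η (j + i)`.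

Hence `μ σ^{j+m} η ∈ X_η` with `|μ| = m` forces `μ = η_{[j, j+m)}`, and every word of `ℒ(X_η)` is
such a block of `η`.
-/

def IsToeplitz (η : ℕ → A) : Prop :=
  ∀ n : ℕ, ∃ p : ℕ, 1 ≤ p ∧ ∀ k : ℕ, η (n + k * p) = η n

/-- The shift space `X_η`. -/
abbrev orbitClosure [TopologicalSpace A] (η : ℕ → A) : Set (ℕ → A) :=
  closure {y | ∃ n : ℕ, shiftMap^[n] η = y}

lemma shiftMap_iterate_apply (x : ℕ → A) (n t : ℕ) : shiftMap^[n] x t = x (t + n) := by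
  induction n generalizing x with
  | zero => rfl
  | succ k ih => rw [Function.iterate_succ_apply, ih]; rfl

lemma prependWord_apply_of_lt (μ : List A) (x : ℕ → A) {t : ℕ} (ht : t < μ.length) :
    prependWord μ x t = μ[t] :=
  dif_pos ht

lemma prependWord_apply_of_le (μ : List A) (x : ℕ → A) {t : ℕ} (ht : μ.length ≤ t) :
    prependWord μ x t = x (t - μ.length) :=
  dif_neg (Nat.not_lt.mpr ht)

lemma exists_eq_on_lt_of_mem_closure {B : Type*} [TopologicalSpace B] [DiscreteTopology B]
    {S : Set (ℕ → B)} {x : ℕ → B} (hx : x ∈ closure S) (L : ℕ) :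
    ∃ z ∈ S, ∀ t < L, z t = x t := by
  have hopen : IsOpen ((Set.Iio L).pi fun t => {x t}) :=
    isOpen_set_pi (Set.finite_Iio L) fun _ _ => isOpen_discrete _
  obtain ⟨z, hzx, hzS⟩ := mem_closure_iff.mp hx _ hopen fun t _ => rfl
  exact ⟨z, hzS, fun t ht => hzx t ht⟩

lemma exists_fiber_forall_of_antitone {F : Type*} [Finite F] (c : ℕ → F) {P : ℕ → ℕ → Prop}
    (hP : ∀ {L L' d}, L ≤ L' → P L' d → P L d) (h : ∀ L, ∃ d, P L d) :
    ∃ r, ∀ L, ∃ d, c d = r ∧ P L d := by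
  choose d hd using h
  obtain ⟨r, hr⟩ := Finite.exists_infinite_fiber (c ∘ d)
  refine ⟨r, fun L => ?_⟩
  obtain ⟨L', hL', hLL'⟩ := (Set.infinite_coe_iff.mp hr).exists_gt L
  exact ⟨d L', hL', hP hLL'.le (hd L')⟩

lemma zero_mem_of_add_mem {G : Type*} [AddLeftCancelMonoid G] [Finite G] {S : Set G}
    (hne : S.Nonempty) (hadd : ∀ a ∈ S, ∀ b ∈ S, a + b ∈ S) : (0 : G) ∈ S := by
  obtain ⟨r, hr⟩ := hne
  have hsmul : ∀ k : ℕ, (k + 1) • r ∈ S := fun k => by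
    induction k with
    | zero => simpa using hr
    | succ k ih => simpa [succ_nsmul] using hadd _ ih r hr
  have hpos := (isOfFinAddOrder_of_finite r).addOrderOf_pos
  simpa [Nat.sub_add_cancel hpos, addOrderOf_nsmul_eq_zero] using hsmul (addOrderOf r - 1)

namespace IsToeplitz

variable {η : ℕ → A}

lemma exists_common_period (hη : IsToeplitz η) (M : ℕ) :
    ∃ p : ℕ, 1 ≤ p ∧ ∀ t < M, ∀ c : ℕ, η (t + c * p) = η t := by
  induction M with
  | zero => exact ⟨1, le_rfl, by omega⟩
  | succ M ih =>
    obtain ⟨p, hp, hper⟩ := ih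
    obtain ⟨q, hq, hqper⟩ := hη M
    refine ⟨p * q, Nat.mul_pos hp hq, fun t ht c => ?_⟩
    rcases Nat.lt_succ_iff_lt_or_eq.mp ht with ht | rfl
    · simpa [mul_comm, mul_left_comm, mul_assoc] using hper t ht (c * q)
    · simpa [mul_comm, mul_left_comm, mul_assoc] using hqper (c * p)

lemma exists_occurrence_ge [TopologicalSpace A] [DiscreteTopology A] (hη : IsToeplitz η)
    {x : ℕ → A} (hx : x ∈ orbitClosure η) (L N : ℕ) :
    ∃ n, N ≤ n ∧ ∀ t < L, η (n + t) = x t := by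
  obtain ⟨_, ⟨n, rfl⟩, hn⟩ := exists_eq_on_lt_of_mem_closure hx L
  obtain ⟨p, hp, hper⟩ := hη.exists_common_period (n + L)
  refine ⟨n + N * p, le_add_left (Nat.le_mul_of_pos_right N hp), fun t ht => ?_⟩
  rw [← hn t ht, shiftMap_iterate_apply, add_comm t n, ← hper (n + t) (by omega) N]
  congr 1; ring

theorem eq_of_mem_orbitClosure [TopologicalSpace A] [DiscreteTopology A] (hη : IsToeplitz η)
    {x : ℕ → A} (hx : x ∈ orbitClosure η) {j m : ℕ} (htail : ∀ t, m ≤ t → x t = η (j + t))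
    (i : ℕ) : x i = η (j + i) := by
  obtain ⟨p, hp, hper⟩ := hη (j + i)
  have : NeZero p := ⟨by omega⟩
  let S : Set (ZMod p) :=
    {r | ∀ L, ∃ d : ℕ, (d : ZMod p) = r ∧ m ≤ d ∧ ∀ t < L, η (j + d + t) = x t}
  have hne : S.Nonempty := by
    refine exists_fiber_forall_of_antitone (fun d : ℕ => (d : ZMod p))
      (fun hLL' ⟨hd, hocc⟩ => ⟨hd, fun t ht => hocc t (by omega)⟩) fun L => ?_
    obtain ⟨n, hn, hocc⟩ := hη.exists_occurrence_ge hx L (j + m)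
    exact ⟨n - j, by omega, fun t ht => by rw [← hocc t ht]; congr 1; omega⟩
  have hadd : ∀ a ∈ S, ∀ b ∈ S, a + b ∈ S := by
    intro a ha b hb L
    obtain ⟨d₁, rfl, hd₁, hocc₁⟩ := ha L
    obtain ⟨d₂, rfl, hd₂, hocc₂⟩ := hb (d₁ + L)
    refine ⟨d₁ + d₂, by push_cast; ring, by omega, fun t ht => ?_⟩
    calc η (j + (d₁ + d₂) + t) = x (d₁ + t) := by
          rw [← hocc₂ (d₁ + t) (by omega)]; ring_nf
      _ = η (j + d₁ + t) := by rw [htail _ (by omega)]; ring_nf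
      _ = x t := hocc₁ t ht
  obtain ⟨d, hd0, -, hocc⟩ := zero_mem_of_add_mem hne hadd (i + 1)
  obtain ⟨k, rfl⟩ := (ZMod.natCast_eq_zero_iff d p).mp hd0
  rw [← hocc i (Nat.lt_succ_self i), ← hper k]
  ring_nf

theorem pastSet_shift [TopologicalSpace A] [DiscreteTopology A] (hη : IsToeplitz η)
    (j m : ℕ) :
    PastSet (orbitClosure η) m (shiftMap^[j + m] η) = {(List.range m).map fun i => η (j + i)} := by
  ext ν
  constructor
  · rintro ⟨hlen, hmem⟩
    have hν := hη.eq_of_mem_orbitClosure hmem (j := j) (m := m) fun t ht => by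
      rw [prependWord_apply_of_le _ _ (hlen ▸ ht), shiftMap_iterate_apply, hlen]
      congr 1; omega
    refine List.ext_getElem (by simp [hlen]) fun i h₁ h₂ => ?_
    rw [← prependWord_apply_of_lt ν _ h₁, hν]
    simp
  · rintro rfl
    refine ⟨by simp, subset_closure ⟨j, funext fun t => ?_⟩⟩
    rw [shiftMap_iterate_apply]
    rcases lt_or_ge t m with ht | ht
    · rw [prependWord_apply_of_lt _ _ (by simpa using ht)]
      simp [add_comm]
    · rw [prependWord_apply_of_le _ _ (by simpa using ht), shiftMap_iterate_apply]
      simp only [List.length_map, List.length_range]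
      congr 1; omega

end IsToeplitz

theorem stmt11_general [TopologicalSpace A] [DiscreteTopology A]
    (η : ℕ → A)
    (htoe : ∀ n : ℕ, ∃ p : ℕ, 1 ≤ p ∧ ∀ k : ℕ, η (n + k * p) = η n) :
    (∀ μ ∈ Lang (closure {y | ∃ n : ℕ, shiftMap^[n] η = y}),
      ∃ x ∈ closure {y | ∃ n : ℕ, shiftMap^[n] η = y},
        PastSet (closure {y | ∃ n : ℕ, shiftMap^[n] η = y}) μ.length x = {μ}) ∧
    (∀ m : ℕ, PastSet (closure {y | ∃ n : ℕ, shiftMap^[n] η = y}) m (shiftMap^[m] η)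
        = {(List.range m).map η}) := by
  have hη : IsToeplitz η := htoe
  refine ⟨fun μ ⟨y, hy, l, hμ⟩ => ?_, fun m => by simpa using hη.pastSet_shift 0 m⟩
  obtain ⟨_, ⟨k, rfl⟩, hk⟩ := exists_eq_on_lt_of_mem_closure hy (l + μ.length)
  refine ⟨shiftMap^[k + l + μ.length] η, subset_closure ⟨_, rfl⟩, ?_⟩
  rw [hη.pastSet_shift (k + l) μ.length]
  congr 1
  refine List.ext_getElem (by simp) fun i _ hi => ?_
  have hwindow := hk (l + i) (by omega)
  rw [shiftMap_iterate_apply] at hwindow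
  rw [List.getElem_map, List.getElem_range, ← List.get_eq_getElem (i := ⟨i, hi⟩), ← hμ,
    ← hwindow]
  congr 1; ring

/-- the orbit closure of a non-periodic Toeplitz sequence has property (*);
in fact `P_m(η_{[m,∞)}) = {η_{[0,m-1]}}`. -/
theorem stmt11 [Finite A] [TopologicalSpace A] [DiscreteTopology A]
    (η : ℕ → A)
    (htoe : ∀ n : ℕ, ∃ p : ℕ, 1 ≤ p ∧ ∀ k : ℕ, η (n + k * p) = η n)
    (hnp : ∀ p : ℕ, 1 ≤ p → shiftMap^[p] η ≠ η) :
    (∀ μ ∈ Lang (closure {y | ∃ n : ℕ, shiftMap^[n] η = y}),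
      ∃ x ∈ closure {y | ∃ n : ℕ, shiftMap^[n] η = y},
        PastSet (closure {y | ∃ n : ℕ, shiftMap^[n] η = y}) μ.length x = {μ}) ∧
    (∀ m : ℕ, PastSet (closure {y | ∃ n : ℕ, shiftMap^[n] η = y}) m (shiftMap^[m] η)
        = {(List.range m).map η}) :=
  stmt11_general η htoe
end

section
/- Let X be a one-sided shift space with Sp_l(X) finite and containing no periodic point, and for x ∈ X let 𝔡(x) be the (finite) number of backward orbits terminating at x. If ω is a left special element that is not maximal, and m₀ = min{m > 0 : σ^m(ω) ∈ Sp_l(X)}, then 𝔡(ω) = 𝔡(σ(ω)) = ⋯ = 𝔡(σ^{m₀−1}(ω)), and 𝔡(ω) = Σ_{ω' ∈ σ^{-1}({ω})} 𝔡(ω'). -/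
open Function Set

variable {A : Type*}

/-- The set of backward orbits (directed paths) in `X` terminating at `x`. -/
def BackPaths (X : Set (ℕ → A)) (x : ℕ → A) : Set (ℕ → ℕ → A) :=
  {z | z 0 = x ∧ (∀ m, z m ∈ X) ∧ ∀ m, shiftMap (z (m + 1)) = z m}

/-- `𝔡(x)`: the number of directed paths terminating at `x`. -/
noncomputable def dpath (X : Set (ℕ → A)) (x : ℕ → A) : ℕ := (BackPaths X x).ncard

/-- Prepend a point to a backward path. -/
def consPath (x : ℕ → A) (z : ℕ → ℕ → A) : ℕ → ℕ → A :=
  fun m => Nat.casesOn m x z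

lemma consPath_injective (x : ℕ → A) : Injective (consPath x) := by
  intro z z' h
  funext m
  exact congrFun h (m + 1)

lemma shift_mem {X : Set (ℕ → A)} (hseq : shiftMap '' X = X) {x : ℕ → A} (hx : x ∈ X) :
    shiftMap x ∈ X := by
  rw [← hseq]; exact ⟨x, hx, rfl⟩

lemma iter_mem {X : Set (ℕ → A)} (hseq : shiftMap '' X = X) {x : ℕ → A} (hx : x ∈ X) (s : ℕ) :
    shiftMap^[s] x ∈ X := by
  induction s with
  | zero => simpa using hx
  | succ s ih => rw [Function.iterate_succ_apply']; exact shift_mem hseq ih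

lemma pre_ext {y y' : ℕ → A} (hσ : shiftMap y = shiftMap y') (h0 : y 0 = y' 0) : y = y' := by
  funext n
  cases n with
  | zero => exact h0
  | succ n => exact congrFun hσ n

lemma unique_pre {X : Set (ℕ → A)} {w y y' : ℕ → A} (hw : w ∈ X)
    (hns : ¬ IsLeftSpecial X w) (hy : y ∈ X) (hy' : y' ∈ X)
    (hσy : shiftMap y = w) (hσy' : shiftMap y' = w) : y = y' := by
  by_contra hne
  exact hns ⟨hw, y, y', hy, hy', hne, hσy, hσy'⟩

lemma path_iter {X : Set (ℕ → A)} {x : ℕ → A} {z : ℕ → ℕ → A} (hz : z ∈ BackPaths X x) :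
    ∀ m k : ℕ, shiftMap^[k] (z (m + k)) = z m := by
  intro m k
  induction k generalizing m with
  | zero => rfl
  | succ k ih =>
      have : m + (k + 1) = (m + 1) + k := by omega
      rw [this, Function.iterate_succ_apply', ih (m + 1), hz.2.2 m]

lemma pos_unique {X : Set (ℕ → A)} {x : ℕ → A} {z : ℕ → ℕ → A} (hz : z ∈ BackPaths X x)
    {m m' : ℕ} (he : z m = z m') (hnp : ¬ IsPer (z m')) : m = m' := by
  rcases lt_trichotomy m m' with h | h | h
  · exact absurd ⟨m' - m, by omega, by
      have := path_iter hz m (m' - m)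
      rw [show m + (m' - m) = m' by omega] at this
      rw [this, he]⟩ hnp
  · exact h
  · exact absurd ⟨m - m', by omega, by
      have := path_iter hz m' (m - m')
      rw [show m' + (m - m') = m by omega] at this
      rw [← he, this, he]⟩ hnp

lemma backpaths_finite [Finite A] {X : Set (ℕ → A)} (hfin : (SpL X).Finite)
    (hper : ∀ x ∈ SpL X, ¬ IsPer x) (x : ℕ → A) : (BackPaths X x).Finite := by
  classical
  haveI : Finite ↥(SpL X) := hfin.to_subtype
  haveI := Fintype.ofFinite A
  set F : (ℕ → ℕ → A) → (↥(SpL X) → Option A) := fun z p =>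
    if h : ∃ m, z m = (p : ℕ → A) then some (z (Classical.choose h + 1) 0) else none with hF
  have hinj : Set.InjOn F (BackPaths X x) := by
    intro z hz z' hz' hFz
    have key : ∀ m, z m = z' m := by
      intro m
      induction m with
      | zero => rw [hz.1, hz'.1]
      | succ m ih =>
          by_cases hws : z m ∈ SpL X
          · have h : ∃ k, z k = z m := ⟨m, rfl⟩
            have h' : ∃ k, z' k = z m := ⟨m, ih.symm⟩
            have hnp : ¬ IsPer (z m) := hper _ hws
            have hc : Classical.choose h = m :=
              pos_unique hz (Classical.choose_spec h) hnp
            have hc' : Classical.choose h' = m := by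
              refine pos_unique hz' ?_ ?_
              · rw [Classical.choose_spec h', ih]
              · rw [← ih]; exact hnp
            have := congrFun hFz ⟨z m, hws⟩
            rw [hF] at this
            simp only [dif_pos h, dif_pos h'] at this
            rw [hc, hc'] at this
            have h0 : z (m + 1) 0 = z' (m + 1) 0 := by
              exact Option.some_injective _ this
            refine pre_ext ?_ h0
            rw [hz.2.2 m, hz'.2.2 m, ih]
          · refine unique_pre (X := X) (w := z m) (hz.2.1 m) hws
              (hz.2.1 (m + 1)) (hz'.2.1 (m + 1)) (hz.2.2 m) ?_
            rw [hz'.2.2 m, ih]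
    funext m
    exact key m
  have himfin : (F '' BackPaths X x).Finite :=
    Set.Finite.subset Set.finite_univ (Set.subset_univ _)
  exact Set.Finite.of_finite_image himfin hinj

lemma backPaths_eq_image {X : Set (ℕ → A)} {w y : ℕ → A} (hw : w ∈ X) (hy : y ∈ X)
    (hσ : shiftMap y = w) (huniq : ∀ u, u ∈ X → shiftMap u = w → u = y) :
    BackPaths X w = consPath w '' BackPaths X y := by
  ext v
  constructor
  · rintro ⟨h0, hmem, hsh⟩
    refine ⟨fun m => v (m + 1), ⟨?_, fun m => hmem (m + 1), fun m => hsh (m + 1)⟩, ?_⟩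
    · exact huniq (v 1) (hmem 1) (by rw [hsh 0, h0])
    · funext m
      cases m with
      | zero => exact h0.symm
      | succ m => rfl
  · rintro ⟨z, ⟨h0, hmem, hsh⟩, rfl⟩
    refine ⟨rfl, ?_, ?_⟩
    · intro m
      cases m with
      | zero => exact hw
      | succ m => exact hmem m
    · intro m
      cases m with
      | zero => show shiftMap (z 0) = w; rw [h0]; exact hσ
      | succ m => exact hsh m

lemma dpath_eq_of_unique_pre {X : Set (ℕ → A)} {w y : ℕ → A} (hw : w ∈ X) (hy : y ∈ X)
    (hσ : shiftMap y = w) (huniq : ∀ u, u ∈ X → shiftMap u = w → u = y) :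
    dpath X w = dpath X y := by
  unfold dpath
  rw [backPaths_eq_image hw hy hσ huniq]
  exact Set.ncard_image_of_injective _ (consPath_injective w)

lemma ncard_finset_biUnion {ι α : Type*} (s : Finset ι) (f : ι → Set α)
    (hf : ∀ i ∈ s, (f i).Finite)
    (hd : ∀ i ∈ s, ∀ j ∈ s, i ≠ j → Disjoint (f i) (f j)) :
    (⋃ i ∈ s, f i).ncard = ∑ i ∈ s, (f i).ncard := by
  classical
  induction s using Finset.induction_on with
  | empty => simp
  | @insert a s ha ih =>
      rw [Finset.set_biUnion_insert, Finset.sum_insert ha,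
        Set.ncard_union_eq ?_ (hf a (Finset.mem_insert_self a s)) ?_,
        ih (fun i hi => hf i (Finset.mem_insert_of_mem hi))
          (fun i hi j hj hij => hd i (Finset.mem_insert_of_mem hi) j
            (Finset.mem_insert_of_mem hj) hij)]
      · rw [Set.disjoint_iUnion₂_right]
        intro i hi
        exact hd a (Finset.mem_insert_self a s) i (Finset.mem_insert_of_mem hi)
          (fun h => ha (h ▸ hi))
      · exact Set.Finite.biUnion s.finite_toSet
          (fun i hi => hf i (Finset.mem_insert_of_mem hi))

/-- `𝔡` is constant along the orbit segment up to the next left special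
point, and `𝔡(ω)` is the sum of `𝔡` over the shift-preimages of `ω`. -/
theorem stmt13 [Finite A] [TopologicalSpace A] [DiscreteTopology A]
    (X : Set (ℕ → A)) (hne : X.Nonempty) (hcl : IsClosed X)
    (hseq : shiftMap '' X = X)
    (hfin : (SpL X).Finite) (hper : ∀ x ∈ SpL X, ¬ IsPer x)
    (ω : ℕ → A) (hω : IsLeftSpecial X ω)
    (m₀ : ℕ) (hm₀pos : 0 < m₀) (hm₀ : shiftMap^[m₀] ω ∈ SpL X)
    (hm₀min : ∀ m : ℕ, 0 < m → m < m₀ → shiftMap^[m] ω ∉ SpL X) :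
    (∀ s : ℕ, s < m₀ → dpath X (shiftMap^[s] ω) = dpath X ω) ∧
      dpath X ω = ∑ᶠ y ∈ {y | y ∈ X ∧ shiftMap y = ω}, dpath X y := by
  classical
  have hωX : ω ∈ X := hω.1
  have hiter : ∀ s : ℕ, shiftMap^[s] ω ∈ X := fun s => iter_mem hseq hωX s
  constructor
  · intro s
    induction s with
    | zero => intro _; rfl
    | succ s ih =>
        intro hs
        have hns : ¬ IsLeftSpecial X (shiftMap^[s + 1] ω) :=
          hm₀min (s + 1) (Nat.succ_pos s) hs
        have hσ : shiftMap (shiftMap^[s] ω) = shiftMap^[s + 1] ω :=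
          (Function.iterate_succ_apply' _ _ _).symm
        have huniq : ∀ u, u ∈ X → shiftMap u = shiftMap^[s + 1] ω → u = shiftMap^[s] ω :=
          fun u hu h => unique_pre (hiter (s + 1)) hns hu (hiter s) h hσ
        rw [dpath_eq_of_unique_pre (hiter (s + 1)) (hiter s) hσ huniq,
          ih (Nat.lt_of_succ_lt hs)]
  · set P : Set (ℕ → A) := {y | y ∈ X ∧ shiftMap y = ω} with hP
    have hPfin : P.Finite := by
      have hinj : Set.InjOn (fun y : ℕ → A => y 0) P := by
        intro a ha b hb hab
        exact pre_ext (by rw [ha.2, hb.2]) hab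
      exact Set.Finite.of_finite_image
        (Set.Finite.subset Set.finite_univ (Set.subset_univ _)) hinj
    have hQ : P = ↑hPfin.toFinset := hPfin.coe_toFinset.symm
    rw [hQ, finsum_mem_coe_finset]
    have hunion : BackPaths X ω = ⋃ y ∈ hPfin.toFinset, consPath ω '' BackPaths X y := by
      ext v
      simp only [Set.mem_iUnion, Set.Finite.mem_toFinset, Finset.mem_coe]
      constructor
      · intro hv
        refine ⟨v 1, ⟨hv.2.1 1, by rw [hv.2.2 0, hv.1]⟩,
          fun m => v (m + 1), ⟨rfl, fun m => hv.2.1 (m + 1), fun m => hv.2.2 (m + 1)⟩, ?_⟩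
        funext m
        cases m with
        | zero => exact hv.1.symm
        | succ m => rfl
      · rintro ⟨y, hy, z, ⟨h0, hmem, hsh⟩, rfl⟩
        refine ⟨rfl, fun m => ?_, fun m => ?_⟩
        · cases m with
          | zero => exact hωX
          | succ m => exact hmem m
        · cases m with
          | zero => show shiftMap (z 0) = ω; rw [h0]; exact hy.2
          | succ m => exact hsh m
    unfold dpath
    rw [hunion, ncard_finset_biUnion _ _
      (fun y _ => (backpaths_finite hfin hper y).image _)
      ?_]
    · exact Finset.sum_congr rfl fun y _ =>
        Set.ncard_image_of_injective _ (consPath_injective ω)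
    · intro y hy y' hy' hne
      rw [Set.disjoint_left]
      rintro v ⟨z, hz, rfl⟩ ⟨z', hz', he⟩
      exact hne (by rw [← hz.1, ← hz'.1]; exact (congrFun he 1).symm)
end
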